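/- Let b₁, b₂, b₃ > 0 and let G ∈ ℝ^{3×3} have vanishing third column. Then the function c = (c₁,c₂,c₃) ↦ b₁‖sym(G + c eᵀ₃)‖² + b₂‖skew(G + c eᵀ₃)‖² + b₃ (tr(G + c eᵀ₃))² has a unique global minimizer over ℝ³, given by c* = ( ((b₂−b₁)/(b₁+b₂)) G₃₁, ((b₂−b₁)/(b₁+b₂)) G₃₂, −(b₃/(b₁+b₃)) (G₁₁ + G₂₂) ). -/

import Mathlib

open Matrix

noncomputable section

/-- Symmetric part of a matrix. -/
def msym {n : ℕ} (X : Matrix (Fin n) (Fin n) ℝ) : Matrix (Fin n) (Fin n) ℝ :=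
  (1 / 2 : ℝ) • (X + Xᵀ)

/-- Skew-symmetric part of a matrix. -/
def mskew {n : ℕ} (X : Matrix (Fin n) (Fin n) ℝ) : Matrix (Fin n) (Fin n) ℝ :=
  (1 / 2 : ℝ) • (X - Xᵀ)

/-- Squared Frobenius norm `‖X‖² = tr(XᵀX)`. -/
def mnormSq {n : ℕ} (X : Matrix (Fin n) (Fin n) ℝ) : ℝ :=
  Matrix.trace (Xᵀ * X)

/-- The curvature energy as a function of the third column `c`. -/
def fcurv (b₁ b₂ b₃ : ℝ) (G : Matrix (Fin 3) (Fin 3) ℝ) (c : Fin 3 → ℝ) : ℝ :=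
  b₁ * mnormSq (msym (G + vecMulVec c (Pi.single 2 1)))
    + b₂ * mnormSq (mskew (G + vecMulVec c (Pi.single 2 1)))
    + b₃ * (Matrix.trace (G + vecMulVec c (Pi.single 2 1))) ^ 2

/-!
Because the third column of `G` vanishes, the energy is a separable quadratic in `c` with
quadratic part `((b₁ + b₂) / 2) (c₁² + c₂²) + (b₁ + b₃) c₃²`. Completing the square shows that
`f(c) - f(c*)` is this positive definite form evaluated at `c - c*`.
-/

def fcurvMinimizer (b₁ b₂ b₃ : ℝ) (G : Matrix (Fin 3) (Fin 3) ℝ) : Fin 3 → ℝ :=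
  ![((b₂ - b₁) / (b₁ + b₂)) * G 2 0,
    ((b₂ - b₁) / (b₁ + b₂)) * G 2 1,
    -(b₃ / (b₁ + b₃)) * (G 0 0 + G 1 1)]

lemma eq_of_weighted_sum_sq_sub_eq_zero {α β : ℝ} (hα : 0 < α) (hβ : 0 < β)
    {c d : Fin 3 → ℝ}
    (h : α * ((c 0 - d 0) ^ 2 + (c 1 - d 1) ^ 2) + β * (c 2 - d 2) ^ 2 = 0) : c = d := by
  rw [add_eq_zero_iff_of_nonneg (by positivity) (by positivity), mul_eq_zero, mul_eq_zero,
    or_iff_right hα.ne', or_iff_right hβ.ne',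
    add_eq_zero_iff_of_nonneg (by positivity) (by positivity)] at h
  obtain ⟨⟨h0, h1⟩, h2⟩ := h
  simp only [pow_eq_zero_iff two_ne_zero, sub_eq_zero] at h0 h1 h2
  ext i
  fin_cases i <;> assumption

lemma fcurv_sub_fcurv (b₁ b₂ b₃ : ℝ) {G : Matrix (Fin 3) (Fin 3) ℝ} (hG : ∀ i, G i 2 = 0)
    (c d : Fin 3 → ℝ) :
    fcurv b₁ b₂ b₃ G c - fcurv b₁ b₂ b₃ G d =
      ((b₁ + b₂) / 2) * (c 0 ^ 2 - d 0 ^ 2 + c 1 ^ 2 - d 1 ^ 2)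
      + (b₁ - b₂) * (G 2 0 * (c 0 - d 0) + G 2 1 * (c 1 - d 1))
      + (b₁ + b₃) * (c 2 ^ 2 - d 2 ^ 2)
      + 2 * b₃ * (G 0 0 + G 1 1) * (c 2 - d 2) := by
  simp only [fcurv, mnormSq, msym, mskew, Matrix.trace, Matrix.diag, Matrix.mul_apply,
    Fin.sum_univ_three, Matrix.add_apply, Matrix.smul_apply, Matrix.transpose_apply,
    Matrix.sub_apply, vecMulVec_apply, Pi.single_apply, hG, smul_eq_mul,
    Fin.reduceEq, reduceIte, mul_zero, add_zero, zero_add, mul_one]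
  ring

lemma fcurv_sub_fcurv_minimizer {b₁ b₂ b₃ : ℝ} (h₁₂ : b₁ + b₂ ≠ 0) (h₁₃ : b₁ + b₃ ≠ 0)
    {G : Matrix (Fin 3) (Fin 3) ℝ} (hG : ∀ i, G i 2 = 0) (c : Fin 3 → ℝ) :
    fcurv b₁ b₂ b₃ G c - fcurv b₁ b₂ b₃ G (fcurvMinimizer b₁ b₂ b₃ G) =
      ((b₁ + b₂) / 2) * ((c 0 - fcurvMinimizer b₁ b₂ b₃ G 0) ^ 2
          + (c 1 - fcurvMinimizer b₁ b₂ b₃ G 1) ^ 2)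
        + (b₁ + b₃) * (c 2 - fcurvMinimizer b₁ b₂ b₃ G 2) ^ 2 := by
  rw [fcurv_sub_fcurv b₁ b₂ b₃ hG]
  simp only [fcurvMinimizer, Matrix.cons_val_zero, Matrix.cons_val_one, Matrix.cons_val_two,
    Matrix.tail_cons, Matrix.head_cons]
  field_simp
  ring

theorem stmt_10 (b₁ b₂ b₃ : ℝ) (hb₁ : 0 < b₁) (hb₂ : 0 < b₂) (hb₃ : 0 < b₃)
    (G : Matrix (Fin 3) (Fin 3) ℝ) (hG : ∀ i, G i 2 = 0) :
    (∀ c : Fin 3 → ℝ,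
        fcurv b₁ b₂ b₃ G
          ![((b₂ - b₁) / (b₁ + b₂)) * G 2 0,
            ((b₂ - b₁) / (b₁ + b₂)) * G 2 1,
            -(b₃ / (b₁ + b₃)) * (G 0 0 + G 1 1)] ≤ fcurv b₁ b₂ b₃ G c) ∧
    (∀ c : Fin 3 → ℝ,
        fcurv b₁ b₂ b₃ G c
            = fcurv b₁ b₂ b₃ G
                ![((b₂ - b₁) / (b₁ + b₂)) * G 2 0,
                  ((b₂ - b₁) / (b₁ + b₂)) * G 2 1,
                  -(b₃ / (b₁ + b₃)) * (G 0 0 + G 1 1)] →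
          c = ![((b₂ - b₁) / (b₁ + b₂)) * G 2 0,
                ((b₂ - b₁) / (b₁ + b₂)) * G 2 1,
                -(b₃ / (b₁ + b₃)) * (G 0 0 + G 1 1)]) := by
  have h₁₂ : 0 < b₁ + b₂ := by positivity
  have h₁₃ : 0 < b₁ + b₃ := by positivity
  have hsq := fcurv_sub_fcurv_minimizer h₁₂.ne' h₁₃.ne' hG
  change (∀ c, fcurv b₁ b₂ b₃ G (fcurvMinimizer b₁ b₂ b₃ G) ≤ fcurv b₁ b₂ b₃ G c) ∧
    ∀ c, fcurv b₁ b₂ b₃ G c = fcurv b₁ b₂ b₃ G (fcurvMinimizer b₁ b₂ b₃ G) →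
      c = fcurvMinimizer b₁ b₂ b₃ G
  refine ⟨fun c ↦ ?_, fun c hc ↦ ?_⟩
  · exact sub_nonneg.mp (hsq c ▸ by positivity)
  · have hzero := hsq c
    rw [hc, sub_self] at hzero
    exact eq_of_weighted_sum_sq_sub_eq_zero (half_pos h₁₂) h₁₃ hzero.symm
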